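/- arXiv:1809.04694 — 2 statements merged into one kernel-verified Lean document; each statement's English description precedes it below -/
import Mathlib

section
/- Let q̃ : ℝ → ℝ be continuous with q̃(x) → ∞ as x → -∞. Then for every M > 0 there exist a twice continuously differentiable function y : ℝ → ℝ solving -y'' + q̃·y = 0 on ℝ and a point x₀ < 0 such that y is strictly positive on (-∞, x₀) and |y(x)| ≤ e^{-M·|x|} for all x < x₀. -/
/-!
Fix `a < 0` with `q̃ ≥ M²` on `(-∞, a]`. The solution `y` of `y'' = q̃ y` with `y(a) = 1`,
`y'(a) = -M` stays positive, hence convex and decreasing, on `(-∞, a]`, and comparison with the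
solution `e^{M(a-x)}` of `y'' = M² y` gives `y(x) ≥ e^{M(a-x)}`. Reduction of order produces the
second solution `z = y ∫_{-∞}^x y⁻²`, which is positive, and since `y` decreases,
`z(x) ≤ ∫_{-∞}^x 1/y ≤ e^{M(x-a)}/M`; a multiple of `z` is the required solution.

Solutions of the linear equation exist on all of `ℝ`: the Picard operator of `Y' = A t Y` is a
contraction on bounded continuous functions for the weighted norm
`sup ‖Y x‖ / cosh (2 ∫_{t₀}^x ‖A‖)`.
-/

open Filter Real Set MeasureTheory intervalIntegral
open scoped BoundedContinuousFunction

section LinearODE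

variable {E : Type*} [NormedAddCommGroup E] [NormedSpace ℝ E] {A : ℝ → E →L[ℝ] E}

lemma integral_mul_cosh_two_mul_integral {k : ℝ → ℝ} (hk : Continuous k) (t₀ x : ℝ) :
    ∫ s in t₀..x, k s * cosh (2 * ∫ r in t₀..s, k r) = sinh (2 * ∫ r in t₀..x, k r) / 2 := by
  have hderiv : ∀ s, HasDerivAt (fun s => sinh (2 * ∫ r in t₀..s, k r) / 2)
      (k s * cosh (2 * ∫ r in t₀..s, k r)) s := fun s =>
    (((hk.integral_hasStrictDerivAt t₀ s).hasDerivAt.const_mul 2).sinh.div_const 2).congr_deriv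
      (by ring)
  rw [integral_eq_sub_of_hasDerivAt (fun s _ => hderiv s)]
  · simp
  · exact (hk.mul (continuous_cosh.comp (continuous_const.mul
      (continuous_primitive (fun a b => hk.intervalIntegrable a b) t₀)))).intervalIntegrable _ _

lemma abs_sinh_le_cosh (x : ℝ) : |sinh x| ≤ cosh x :=
  abs_le.2 ⟨by linarith [sinh_lt_cosh (-x), sinh_neg x, cosh_neg x], (sinh_lt_cosh x).le⟩

-- Since `∫ s in t₀..x, ‖A s‖ * picardWeight A t₀ s = sinh (2 * ∫ s in t₀..x, ‖A s‖) / 2`, this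
-- weight makes the Picard operator of `Y' = A t Y` a `1/2`-contraction on the whole line.
variable (A) in
noncomputable def picardWeight (t₀ x : ℝ) : ℝ := cosh (2 * ∫ s in t₀..x, ‖A s‖)

lemma continuous_picardWeight (hA : Continuous A) (t₀ : ℝ) : Continuous (picardWeight A t₀) :=
  continuous_cosh.comp (continuous_const.mul
    (continuous_primitive (fun a b => hA.norm.intervalIntegrable a b) t₀))

lemma one_le_picardWeight (t₀ x : ℝ) : 1 ≤ picardWeight A t₀ x := one_le_cosh _

lemma picardWeight_pos (t₀ x : ℝ) : 0 < picardWeight A t₀ x := cosh_pos _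

lemma norm_integral_picardWeight_smul_le (hA : Continuous A) (t₀ x : ℝ) {G : ℝ → E}
    {C : ℝ} (hC : ∀ s, ‖G s‖ ≤ C) :
    ‖∫ s in t₀..x, A s (picardWeight A t₀ s • G s)‖ ≤ C * picardWeight A t₀ x / 2 := by
  have hbound : ∀ s, ‖A s (picardWeight A t₀ s • G s)‖ ≤ C * (‖A s‖ * picardWeight A t₀ s) := by
    intro s
    calc ‖A s (picardWeight A t₀ s • G s)‖ ≤ ‖A s‖ * ‖picardWeight A t₀ s • G s‖ :=
          (A s).le_opNorm _
      _ = ‖A s‖ * (picardWeight A t₀ s * ‖G s‖) := by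
          rw [norm_smul, Real.norm_of_nonneg (picardWeight_pos t₀ s).le]
      _ ≤ ‖A s‖ * (picardWeight A t₀ s * C) := by
          gcongr
          · exact (picardWeight_pos t₀ s).le
          · exact hC s
      _ = _ := by ring
  have hC0 : 0 ≤ C := (norm_nonneg _).trans (hC t₀)
  calc _ ≤ |∫ s in t₀..x, C * (‖A s‖ * picardWeight A t₀ s)| :=
        norm_integral_le_abs_of_norm_le (Eventually.of_forall hbound) ((continuous_const.mul
          (hA.norm.mul (continuous_picardWeight hA t₀))).intervalIntegrable _ _)
    _ = C * |sinh (2 * ∫ s in t₀..x, ‖A s‖)| / 2 := by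
        simp only [picardWeight]
        rw [intervalIntegral.integral_const_mul, integral_mul_cosh_two_mul_integral hA.norm,
          abs_mul, abs_div, abs_of_nonneg hC0]
        simp [mul_div_assoc]
    _ ≤ C * picardWeight A t₀ x / 2 := by
        gcongr
        exact abs_sinh_le_cosh _

lemma continuous_integral_picardWeight_smul (hA : Continuous A) (t₀ : ℝ) {G : ℝ → E}
    (hG : Continuous G) : Continuous fun x => ∫ s in t₀..x, A s (picardWeight A t₀ s • G s) :=
  continuous_primitive (fun _ _ => (hA.clm_apply
    ((continuous_picardWeight hA t₀).smul hG)).intervalIntegrable _ _) t₀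

/-- The Picard operator of `Y' = A t Y`, `Y t₀ = x₀`, acting on `G = Y / picardWeight A t₀`. -/
noncomputable def weightedPicard (hA : Continuous A) (t₀ : ℝ) (x₀ : E) (G : ℝ →ᵇ E) : ℝ →ᵇ E :=
  .ofNormedAddCommGroup
    (fun x => (picardWeight A t₀ x)⁻¹ • (x₀ + ∫ s in t₀..x, A s (picardWeight A t₀ s • G s)))
    (((continuous_picardWeight hA t₀).inv₀ fun x => (picardWeight_pos t₀ x).ne').smul
      (continuous_const.add (continuous_integral_picardWeight_smul hA t₀ G.continuous)))
    (‖x₀‖ + ‖G‖ / 2) fun x => by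
      have hρ := picardWeight_pos (A := A) t₀ x
      rw [norm_smul, norm_inv, Real.norm_of_nonneg hρ.le, inv_mul_le_iff₀ hρ]
      calc _ ≤ ‖x₀‖ + ‖G‖ * picardWeight A t₀ x / 2 :=
            (norm_add_le _ _).trans (by
              gcongr; exact norm_integral_picardWeight_smul_le hA t₀ x G.norm_coe_le_norm)
        _ ≤ _ := by nlinarith [one_le_picardWeight (A := A) t₀ x, norm_nonneg x₀]

lemma weightedPicard_apply (hA : Continuous A) (t₀ : ℝ) (x₀ : E) (G : ℝ →ᵇ E) (x : ℝ) :
    weightedPicard hA t₀ x₀ G x =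
      (picardWeight A t₀ x)⁻¹ • (x₀ + ∫ s in t₀..x, A s (picardWeight A t₀ s • G s)) :=
  rfl

lemma contractingWith_weightedPicard (hA : Continuous A) (t₀ : ℝ) (x₀ : E) :
    ContractingWith (1 / 2) (weightedPicard hA t₀ x₀) := by
  refine ⟨by norm_num, LipschitzWith.of_dist_le_mul fun G H => ?_⟩
  rw [BoundedContinuousFunction.dist_le (by positivity)]
  intro x
  have hρ := picardWeight_pos (A := A) t₀ x
  have hint : ∀ F : ℝ →ᵇ E, IntervalIntegrable (fun s => A s (picardWeight A t₀ s • F s))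
      volume t₀ x := fun F =>
    (hA.clm_apply ((continuous_picardWeight hA t₀).smul F.continuous)).intervalIntegrable _ _
  rw [weightedPicard_apply, weightedPicard_apply, dist_eq_norm, ← smul_sub, add_sub_add_left_eq_sub,
    ← intervalIntegral.integral_sub (hint G) (hint H), norm_smul, norm_inv,
    Real.norm_of_nonneg hρ.le, inv_mul_le_iff₀ hρ]
  simp only [← map_sub, ← smul_sub]
  calc _ ≤ dist G H * picardWeight A t₀ x / 2 :=
        norm_integral_picardWeight_smul_le hA t₀ x fun s =>
          ((G - H).norm_coe_le_norm s).trans_eq (dist_eq_norm G H).symm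
    _ = _ := by push_cast; ring

theorem exists_forall_hasDerivAt_clm_apply [CompleteSpace E] (hA : Continuous A) (t₀ : ℝ)
    (x₀ : E) : ∃ Y : ℝ → E, Y t₀ = x₀ ∧ ∀ t, HasDerivAt Y (A t (Y t)) t := by
  obtain ⟨G, hG⟩ : ∃ G, weightedPicard hA t₀ x₀ G = G :=
    ⟨_, (contractingWith_weightedPicard hA t₀ x₀).fixedPoint_isFixedPt⟩
  have hY : ∀ x, picardWeight A t₀ x • G x =
      x₀ + ∫ s in t₀..x, A s (picardWeight A t₀ s • G s) := fun x => by
    conv_lhs => rw [← hG, weightedPicard_apply, smul_inv_smul₀ (picardWeight_pos t₀ x).ne']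
  refine ⟨fun x => picardWeight A t₀ x • G x, (hY t₀).trans (by simp), fun t => ?_⟩
  exact ((hA.clm_apply ((continuous_picardWeight hA t₀).smul G.continuous)
    ).integral_hasStrictDerivAt t₀ t).hasDerivAt.const_add x₀ |>.congr_of_eventuallyEq
      (.of_forall hY)

end LinearODE

lemma monotoneOn_of_forall_hasDerivAt {D : Set ℝ} (hD : Convex ℝ D) {f f' : ℝ → ℝ}
    (hf : ∀ x, HasDerivAt f (f' x) x) (hf' : ∀ x ∈ interior D, 0 ≤ f' x) : MonotoneOn f D :=
  monotoneOn_of_hasDerivWithinAt_nonneg hD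
    (fun x _ => (hf x).continuousAt.continuousWithinAt) (fun x _ => (hf x).hasDerivWithinAt) hf'

lemma antitoneOn_of_forall_hasDerivAt {D : Set ℝ} (hD : Convex ℝ D) {f f' : ℝ → ℝ}
    (hf : ∀ x, HasDerivAt f (f' x) x) (hf' : ∀ x ∈ interior D, f' x ≤ 0) : AntitoneOn f D :=
  antitoneOn_of_hasDerivWithinAt_nonpos hD
    (fun x _ => (hf x).continuousAt.continuousWithinAt) (fun x _ => (hf x).hasDerivWithinAt) hf'

namespace Schrodinger

structure IsSolution (q y y' : ℝ → ℝ) : Prop where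
  hasDerivAt : ∀ x, HasDerivAt y (y' x) x
  hasDerivAt_deriv : ∀ x, HasDerivAt y' (q x * y x) x

theorem exists_isSolution {q : ℝ → ℝ} (hq : Continuous q) (t₀ y₀ y₁ : ℝ) :
    ∃ y y', IsSolution q y y' ∧ y t₀ = y₀ ∧ y' t₀ = y₁ := by
  -- `A t (y, p) = (p, q t * y)`
  set A : ℝ → ℝ × ℝ →L[ℝ] ℝ × ℝ := fun t =>
    .inl ℝ ℝ ℝ ∘L .snd ℝ ℝ ℝ + q t • (.inr ℝ ℝ ℝ ∘L .fst ℝ ℝ ℝ)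
  have hA : Continuous A := continuous_const.add (hq.smul continuous_const)
  obtain ⟨Y, hY₀, hY⟩ := exists_forall_hasDerivAt_clm_apply hA t₀ (y₀, y₁)
  refine ⟨fun x => (Y x).1, fun x => (Y x).2, ⟨fun x => ?_, fun x => ?_⟩, by simp [hY₀],
    by simp [hY₀]⟩
  · exact ((ContinuousLinearMap.fst ℝ ℝ ℝ).hasFDerivAt.comp_hasDerivAt x (hY x)).congr_deriv
      (by simp [A])
  · exact ((ContinuousLinearMap.snd ℝ ℝ ℝ).hasFDerivAt.comp_hasDerivAt x (hY x)).congr_deriv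
      (by simp [A])

namespace IsSolution

variable {q y y' z z' : ℝ → ℝ}

lemma continuous (hy : IsSolution q y y') : Continuous y :=
  continuous_iff_continuousAt.2 fun x => (hy.hasDerivAt x).continuousAt

lemma add (hy : IsSolution q y y') (hz : IsSolution q z z') :
    IsSolution q (fun x => y x + z x) (fun x => y' x + z' x) :=
  ⟨fun x => (hy.hasDerivAt x).add (hz.hasDerivAt x),
    fun x => ((hy.hasDerivAt_deriv x).add (hz.hasDerivAt_deriv x)).congr_deriv (by ring)⟩

lemma const_mul (hy : IsSolution q y y') (c : ℝ) :
    IsSolution q (fun x => c * y x) (fun x => c * y' x) :=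
  ⟨fun x => (hy.hasDerivAt x).const_mul c,
    fun x => ((hy.hasDerivAt_deriv x).const_mul c).congr_deriv (by ring)⟩

lemma deriv_deriv (hy : IsSolution q y y') (x : ℝ) : deriv (deriv y) x = q x * y x := by
  rw [funext fun x => (hy.hasDerivAt x).deriv, (hy.hasDerivAt_deriv x).deriv]

lemma contDiff_two (hy : IsSolution q y y') (hq : Continuous q) : ContDiff ℝ 2 y := by
  have hy' : deriv y = y' := funext fun x => (hy.hasDerivAt x).deriv
  have hy'' : deriv y' = fun x => q x * y x := funext fun x => (hy.hasDerivAt_deriv x).deriv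
  rw [show (2 : WithTop ℕ∞) = 1 + 1 from rfl, contDiff_succ_iff_deriv, hy',
    show (1 : WithTop ℕ∞) = 0 + 1 from rfl, contDiff_succ_iff_deriv, hy'', contDiff_zero]
  exact ⟨fun x => (hy.hasDerivAt x).differentiableAt, by simp,
    fun x => (hy.hasDerivAt_deriv x).differentiableAt, by simp, hq.mul hy.continuous⟩

lemma wronskian_eq (hy : IsSolution q y y') (hz : IsSolution q z z') (x t : ℝ) :
    y x * z' x - y' x * z x = y t * z' t - y' t * z t := by
  have hW : ∀ s, HasDerivAt (fun s => y s * z' s - y' s * z s) 0 s := fun s =>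
    (((hy.hasDerivAt s).mul (hz.hasDerivAt_deriv s)).sub
      ((hy.hasDerivAt_deriv s).mul (hz.hasDerivAt s))).congr_deriv (by ring)
  exact is_const_of_deriv_eq_zero (fun s => (hW s).differentiableAt) (fun s => (hW s).deriv) x t

-- Reduction of order: `(z / y)' = W / y ^ 2`, where `W` is the (constant) Wronskian.
lemma div_sub_div_eq_mul_integral (hy : IsSolution q y y') (hz : IsSolution q z z') {a x : ℝ}
    (hy0 : ∀ s ∈ uIcc a x, y s ≠ 0) :
    z x / y x - z a / y a = (y a * z' a - y' a * z a) * ∫ s in a..x, (y s ^ 2)⁻¹ := by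
  rw [← intervalIntegral.integral_const_mul, eq_comm]
  refine integral_eq_sub_of_hasDerivAt (fun s hs => ((hz.hasDerivAt s).div (hy.hasDerivAt s)
    (hy0 s hs)).congr_deriv ?_) ?_
  · rw [← wronskian_eq hy hz s a, div_eq_mul_inv]
    ring
  · exact (continuousOn_const.mul ((hy.continuous.continuousOn.pow 2).inv₀
      fun s hs => pow_ne_zero 2 (hy0 s hs))).intervalIntegrable

lemma antitoneOn_Icc (hy : IsSolution q y y') {b a : ℝ} (hq : ∀ x ∈ Ioo b a, 0 ≤ q x)
    (hy0 : ∀ x ∈ Ioo b a, 0 ≤ y x) (ha : y' a ≤ 0) : AntitoneOn y (Icc b a) := by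
  have hmono : MonotoneOn y' (Icc b a) :=
    monotoneOn_of_forall_hasDerivAt (convex_Icc b a) hy.hasDerivAt_deriv fun x hx => by
      rw [interior_Icc] at hx
      exact mul_nonneg (hq x hx) (hy0 x hx)
  refine antitoneOn_of_forall_hasDerivAt (convex_Icc b a) hy.hasDerivAt fun x hx => ?_
  rw [interior_Icc] at hx
  exact (hmono (Ioo_subset_Icc_self hx) (right_mem_Icc.2 (hx.1.trans hx.2).le) hx.2.le).trans ha

lemma antitoneOn_Iic (hy : IsSolution q y y') {a : ℝ} (hq : ∀ x ≤ a, 0 ≤ q x) (ha : 0 < y a)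
    (ha' : y' a ≤ 0) : AntitoneOn y (Iic a) := by
  have hIcc : ∀ b, (∀ x ∈ Ioo b a, 0 ≤ y x) → AntitoneOn y (Icc b a) := fun b hb =>
    hy.antitoneOn_Icc (fun x hx => hq x hx.2.le) hb ha'
  have hpos : ∀ x ≤ a, 0 < y x := by
    intro x hx
    by_contra! hx0
    -- `b` is the last point of `[x, a]` where `y ≤ 0`; since `y ≥ 0` on `(b, a)`, `y` is convex
    -- there, hence `y b ≥ y a > 0`.
    obtain ⟨b, ⟨hb, hb0⟩, hb_max⟩ := (isCompact_Icc.inter_right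
      (isClosed_le hy.continuous continuous_const)).exists_isGreatest ⟨x, ⟨le_rfl, hx⟩, hx0⟩
    have hab := hIcc b (fun t ht => not_lt.1 fun ht0 => (hb_max ⟨⟨hb.1.trans ht.1.le, ht.2.le⟩,
      ht0.le⟩).not_gt ht.1) (left_mem_Icc.2 hb.2) (right_mem_Icc.2 hb.2) hb.2
    exact (ha.trans_le (hab.trans hb0)).false
  intro s hs t ht hst
  exact hIcc s (fun x hx => (hpos x hx.2.le).le) (left_mem_Icc.2 (hst.trans ht))
    ⟨hst, ht⟩ hst

-- Comparison with `exp (M * (a - x))`: first `(y' + M y) e^{-Mx}` is monotone, so nonpositive,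
-- then `y e^{Mx}` is antitone.
lemma mul_exp_le (hy : IsSolution q y y') {a M : ℝ} (hqM : ∀ x ≤ a, M ^ 2 ≤ q x)
    (hy0 : ∀ x ≤ a, 0 ≤ y x) (ha : y' a + M * y a ≤ 0) {x : ℝ} (hx : x ≤ a) :
    y a * exp (M * (a - x)) ≤ y x := by
  have hd₁ : ∀ x, HasDerivAt (fun x => (y' x + M * y x) * exp (-M * x))
      ((q x - M ^ 2) * y x * exp (-M * x)) x := fun x => by
    refine (((hy.hasDerivAt_deriv x).add ((hy.hasDerivAt x).const_mul M)).mul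
      (((hasDerivAt_id x).const_mul (-M)).exp)).congr_deriv ?_
    simp only [Pi.add_apply, id]
    ring
  have hd₂ : ∀ x, HasDerivAt (fun x => y x * exp (M * x)) ((y' x + M * y x) * exp (M * x)) x :=
    fun x => by
      refine ((hy.hasDerivAt x).mul (((hasDerivAt_id x).const_mul M).exp)).congr_deriv ?_
      simp only [id]
      ring
  have hmono : MonotoneOn (fun x => (y' x + M * y x) * exp (-M * x)) (Iic a) :=
    monotoneOn_of_forall_hasDerivAt (convex_Iic a) hd₁ fun x hx => by
      rw [interior_Iic] at hx
      exact mul_nonneg (mul_nonneg (sub_nonneg.2 (hqM x hx.le)) (hy0 x hx.le)) (exp_pos _).le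
  have hanti : AntitoneOn (fun x => y x * exp (M * x)) (Iic a) :=
    antitoneOn_of_forall_hasDerivAt (convex_Iic a) hd₂ fun x hx => by
      rw [interior_Iic] at hx
      have := (hmono (mem_Iic.2 hx.le) (mem_Iic.2 le_rfl) hx.le).trans
        (mul_nonpos_of_nonpos_of_nonneg ha (exp_pos _).le)
      exact mul_nonpos_of_nonpos_of_nonneg
        (nonpos_of_mul_nonpos_left this (exp_pos _)) (exp_pos _).le
  have := hanti hx (mem_Iic.2 le_rfl) hx
  rwa [mul_sub, exp_sub, ← mul_div_assoc, div_le_iff₀ (exp_pos _)]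

end IsSolution

lemma exists_isSolution_antitoneOn_exp_le {q : ℝ → ℝ} (hq : Continuous q) {a M : ℝ} (hM : 0 ≤ M)
    (hqM : ∀ x ≤ a, M ^ 2 ≤ q x) :
    ∃ y y', IsSolution q y y' ∧ AntitoneOn y (Iic a) ∧ ∀ x ≤ a, exp (M * (a - x)) ≤ y x := by
  obtain ⟨y, y', hy, hya, hy'a⟩ := exists_isSolution hq a 1 (-M)
  have hanti := hy.antitoneOn_Iic (fun x hx => (sq_nonneg M).trans (hqM x hx))
    (by rw [hya]; exact one_pos) (by rw [hy'a]; linarith)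
  refine ⟨y, y', hy, hanti, fun x hx => ?_⟩
  have hy0 : ∀ x ≤ a, 0 ≤ y x := fun x hx =>
    zero_le_one.trans (hya ▸ hanti hx (mem_Iic.2 le_rfl) hx)
  simpa [hya] using hy.mul_exp_le hqM hy0 (by simp [hya, hy'a]) hx

lemma exists_isSolution_eq_mul_integral_Iic {q y y' : ℝ → ℝ} (hq : Continuous q)
    (hy : IsSolution q y y') {a : ℝ} (hy0 : ∀ x ≤ a, y x ≠ 0)
    (hint : IntegrableOn (fun s => (y s ^ 2)⁻¹) (Iic a)) :
    ∃ z z', IsSolution q z z' ∧ ∀ x ≤ a, z x = y x * ∫ s in Iic x, (y s ^ 2)⁻¹ := by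
  obtain ⟨w, w', hw, hwa, hw'a⟩ := exists_isSolution hq a 0 (y a)⁻¹
  refine ⟨_, _, (hy.const_mul (∫ s in Iic a, (y s ^ 2)⁻¹)).add hw, fun x hx => ?_⟩
  have hrw := hy.div_sub_div_eq_mul_integral hw fun s hs => hy0 s
    (by rw [uIcc_of_ge hx] at hs; exact hs.2)
  rw [hwa, hw'a, zero_div, sub_zero, mul_zero, sub_zero, mul_inv_cancel₀ (hy0 a le_rfl),
    one_mul, ← integral_Iic_sub_Iic hint (hint.mono_set (Iic_subset_Iic.2 hx))] at hrw
  rw [div_eq_iff (hy0 x hx)] at hrw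
  rw [hrw]
  ring

lemma exists_isSolution_pos_le_exp {q : ℝ → ℝ} (hq : Continuous q) {a M : ℝ} (hM : 0 < M)
    (hqM : ∀ x ≤ a, M ^ 2 ≤ q x) :
    ∃ z z', IsSolution q z z' ∧ ∀ x ≤ a, 0 < z x ∧ z x ≤ exp (M * x) := by
  obtain ⟨y, y', hy, hanti, hgrowth⟩ := exists_isSolution_antitoneOn_exp_le hq hM.le hqM
  have hy1 : ∀ x ≤ a, 1 ≤ y x := fun x hx =>
    (one_le_exp (mul_nonneg hM.le (sub_nonneg.2 hx))).trans (hgrowth x hx)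
  have hy0 : ∀ x ≤ a, 0 < y x := fun x hx => one_pos.trans_le (hy1 x hx)
  have hbound : ∀ x ≤ a, ∀ s ≤ x, y x * (y s ^ 2)⁻¹ ≤ exp (-(M * a)) * exp (M * s) := by
    intro x hx s hs
    have := hy0 s (hs.trans hx)
    calc y x * (y s ^ 2)⁻¹ ≤ y s * (y s ^ 2)⁻¹ := by
          gcongr; exact hanti (mem_Iic.2 (hs.trans hx)) (mem_Iic.2 hx) hs
      _ = (y s)⁻¹ := by field_simp
      _ ≤ (exp (M * (a - s)))⁻¹ := inv_anti₀ (exp_pos _) (hgrowth s (hs.trans hx))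
      _ = exp (-(M * a)) * exp (M * s) := by rw [← exp_neg, ← exp_add]; ring_nf
  have hint : ∀ x ≤ a, IntegrableOn (fun s => (y s ^ 2)⁻¹) (Iic x) := fun x hx =>
    Integrable.mono' ((integrableOn_exp_mul_Iic hM x).const_mul _)
      (((hy.continuous.continuousOn.pow 2).inv₀ fun s hs =>
        pow_ne_zero 2 (hy0 s (le_trans hs hx)).ne').aestronglyMeasurable measurableSet_Iic)
      ((ae_restrict_iff' measurableSet_Iic).2 (.of_forall fun s hs => by
        rw [Real.norm_of_nonneg (by positivity)]
        exact (le_mul_of_one_le_left (by positivity) (hy1 s (le_trans hs hx))).trans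
          (hbound s (le_trans hs hx) s le_rfl)))
  obtain ⟨z, z', hz, hz_eq⟩ := exists_isSolution_eq_mul_integral_Iic hq hy
    (fun x hx => (hy0 x hx).ne') (hint a le_rfl)
  refine ⟨_, _, hz.const_mul (M * exp (M * a)), fun x hx => ⟨?_, ?_⟩⟩
  · have hpos : 0 < ∫ s in Iic x, (y s ^ 2)⁻¹ := by
      rw [setIntegral_pos_iff_support_of_nonneg_ae (.of_forall fun s => by simp; positivity)
        (hint x hx), inter_eq_right.2 fun s hs => by simp [(hy0 s (le_trans hs hx)).ne'],
        Real.volume_Iic]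
      exact ENNReal.zero_lt_top
    rw [hz_eq x hx]
    have := hy0 x hx
    positivity
  · calc M * exp (M * a) * z x = M * exp (M * a) * ∫ s in Iic x, y x * (y s ^ 2)⁻¹ := by
          rw [hz_eq x hx, MeasureTheory.integral_const_mul]
      _ ≤ M * exp (M * a) * ∫ s in Iic x, exp (-(M * a)) * exp (M * s) := by
          refine mul_le_mul_of_nonneg_left (setIntegral_mono_on ((hint x hx).const_mul _)
            ((integrableOn_exp_mul_Iic hM x).const_mul _) measurableSet_Iic
            fun s hs => hbound x hx s hs) (by positivity)
      _ = exp (M * x) := by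
          rw [MeasureTheory.integral_const_mul, integral_exp_mul_Iic hM, exp_neg]
          field_simp

end Schrodinger

open Schrodinger in
/-- Let `q̃ : ℝ → ℝ` be continuous with `q̃(x) → ∞` as `x → -∞`. Then for
every `M > 0` there exist a twice continuously differentiable solution `y` of
`-y'' + q̃·y = 0` on `ℝ` and a point `x₀ < 0` such that `y` is strictly positive on
`(-∞, x₀)` and `|y(x)| ≤ e^{-M·|x|}` for all `x < x₀`. -/
theorem decaying_solution_at_minus_infinity
    (qt : ℝ → ℝ) (hqt : Continuous qt)
    (htop : Filter.Tendsto qt Filter.atBot Filter.atTop)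
    (M : ℝ) (hM : 0 < M) :
    ∃ y : ℝ → ℝ, ContDiff ℝ 2 y ∧
      (∀ x : ℝ, -(deriv (deriv y) x) + qt x * y x = 0) ∧
      ∃ x₀ : ℝ, x₀ < 0 ∧
        (∀ x : ℝ, x < x₀ → 0 < y x) ∧
        (∀ x : ℝ, x < x₀ → |y x| ≤ Real.exp (-M * |x|)) := by
  obtain ⟨a, ha⟩ := eventually_atBot.1 (htop.eventually_ge_atTop (M ^ 2))
  obtain ⟨y, y', hy, hdecay⟩ := exists_isSolution_pos_le_exp hqt hM (a := min a (-1))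
    fun x hx => ha x (hx.trans (min_le_left _ _))
  refine ⟨y, hy.contDiff_two hqt, fun x => by rw [hy.deriv_deriv]; ring, min a (-1),
    (min_le_right _ _).trans_lt (by norm_num), fun x hx => (hdecay x hx.le).1, fun x hx => ?_⟩
  have hx0 : x < 0 := hx.trans_le ((min_le_right _ _).trans (by norm_num))
  rw [abs_of_pos (hdecay x hx.le).1, abs_of_neg hx0, neg_mul_neg]
  exact (hdecay x hx.le).2
end

section
/- Let β₁ > 0, β₂ > 1/2 and γ ≠ 0 be real constants with β₁ + β₂ > 1, set β = min{β₂, β₁+β₂-1, 2β₂-1}, and let K ≥ 0. Suppose θ is differentiable on (1,∞) with |θ'(x) - γ| ≤ K·x^{-β₁} for all x > 1. Then there exists a constant C > 0 (depending only on γ, β₁, β₂, K) such that for all 1 < a < b: |∫_a^b sin(θ(x))·x^{-β₂} dx| ≤ C·a^{-β} and |∫_a^b cos(θ(x))·x^{-β₂} dx| ≤ C·a^{-β}. -/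
/-!
Since `θ' ≈ γ`, the function `-cos θ(x) · x^{-β₂} / γ` is an approximate antiderivative of
`sin θ(x) · x^{-β₂}`: its derivative differs from the integrand by at most
`(K x^{-(β₁+β₂)} + β₂ x^{-(β₂+1)}) / |γ|`. The boundary terms contribute `O(a^{-β₂})` and the
integrated error `O(a^{1-(β₁+β₂)} + a^{-β₂})`. The cosine case is the sine case for `θ + π/2`.
-/

open Real intervalIntegral MeasureTheory Set

lemma integral_rpow_neg_le {a b p : ℝ} (ha : 0 < a) (hab : a ≤ b) (hp : 1 < p) :
    ∫ x in a..b, x ^ (-p) ≤ a ^ (1 - p) / (p - 1) := by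
  have h0 : (0 : ℝ) ∉ uIcc a b := notMem_uIcc_of_lt ha (ha.trans_le hab)
  rw [integral_rpow (Or.inr ⟨by linarith, h0⟩), neg_add_eq_sub,
    show (1 : ℝ) - p = -(p - 1) by ring, div_neg, ← neg_div, neg_sub]
  gcongr
  exact sub_le_self _ (rpow_nonneg (ha.trans_le hab).le _)

theorem abs_integral_sub_sub_le_of_hasDerivAt {f f' F G : ℝ → ℝ} {a b : ℝ} (hab : a ≤ b)
    (hF : ∀ x ∈ Icc a b, HasDerivAt F (f' x) x)
    (hf : IntervalIntegrable f volume a b) (hG : IntervalIntegrable G volume a b)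
    (hfG : ∀ x ∈ Icc a b, |f x - f' x| ≤ G x) :
    |(∫ x in a..b, f x) - (F b - F a)| ≤ ∫ x in a..b, G x := by
  have huIoc : uIoc a b = Ioc a b := uIoc_of_le hab
  have hfG' : ∀ᵐ x ∂volume.restrict (uIoc a b), |f x - f' x| ≤ G x := by
    rw [huIoc]
    exact (ae_restrict_iff' measurableSet_Ioc).2
      (ae_of_all _ fun x hx => hfG x (Ioc_subset_Icc_self hx))
  have hf' : IntervalIntegrable f' volume a b := by
    refine (hf.norm.add hG).mono_fun' ?_ ?_
    · refine (measurable_deriv F).aestronglyMeasurable.congr ?_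
      rw [huIoc]
      exact (ae_restrict_iff' measurableSet_Ioc).2
        (ae_of_all _ fun x hx => (hF x (Ioc_subset_Icc_self hx)).deriv)
    · filter_upwards [hfG'] with x hx
      simp only [Real.norm_eq_abs]
      linarith [abs_sub_abs_le_abs_sub (f' x) (f x), abs_sub_comm (f x) (f' x)]
  rw [← integral_eq_sub_of_hasDerivAt (fun x hx => hF x (uIcc_of_le hab ▸ hx)) hf',
    ← integral_sub hf hf']
  exact norm_integral_le_of_norm_le (f := fun x => f x - f' x) hab
    (ae_of_all _ fun x hx => hfG x (Ioc_subset_Icc_self hx)) hG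

lemma abs_sin_mul_rpow_sub_le {t d x β₁ β₂ γ K : ℝ} (hx : 0 < x) (hβ₂ : 0 ≤ β₂) (hγ : γ ≠ 0)
    (hd : |d - γ| ≤ K * x ^ (-β₁)) :
    |sin t * x ^ (-β₂) - (sin t * d * x ^ (-β₂) + β₂ * cos t * x ^ (-β₂ - 1)) / γ| ≤
      (K * x ^ (-(β₁ + β₂)) + β₂ * x ^ (-(β₂ + 1))) / |γ| := by
  have hsplit : sin t * x ^ (-β₂) - (sin t * d * x ^ (-β₂) + β₂ * cos t * x ^ (-β₂ - 1)) / γ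
      = (sin t * (γ - d) * x ^ (-β₂) - β₂ * cos t * x ^ (-(β₂ + 1))) / γ := by
    rw [show -(β₂ + 1) = -β₂ - 1 by ring]
    field_simp
    ring
  have h₁ : |sin t * (γ - d) * x ^ (-β₂)| ≤ K * x ^ (-(β₁ + β₂)) := by
    rw [abs_mul, abs_mul, abs_of_pos (rpow_pos_of_pos hx _), abs_sub_comm, neg_add,
      rpow_add hx, ← mul_assoc]
    calc |sin t| * |d - γ| * x ^ (-β₂) ≤ 1 * (K * x ^ (-β₁)) * x ^ (-β₂) := by
          gcongr; exact abs_sin_le_one t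
      _ = K * x ^ (-β₁) * x ^ (-β₂) := by ring
  have h₂ : |β₂ * cos t * x ^ (-(β₂ + 1))| ≤ β₂ * x ^ (-(β₂ + 1)) := by
    rw [abs_mul, abs_mul, abs_of_nonneg hβ₂, abs_of_pos (rpow_pos_of_pos hx _)]
    gcongr
    exact mul_le_of_le_one_right hβ₂ (abs_cos_le_one t)
  rw [hsplit, abs_div]
  gcongr
  exact (abs_sub _ _).trans (add_le_add h₁ h₂)

lemma integral_mul_rpow_add_mul_rpow_le {a b β₁ β₂ K : ℝ} (ha : 0 < a) (hab : a ≤ b) (hβ₂ : 0 < β₂)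
    (hsum : 1 < β₁ + β₂) (hK : 0 ≤ K) :
    ∫ x in a..b, (K * x ^ (-(β₁ + β₂)) + β₂ * x ^ (-(β₂ + 1))) ≤
      K / (β₁ + β₂ - 1) * a ^ (1 - (β₁ + β₂)) + a ^ (-β₂) := by
  have h0 : (0 : ℝ) ∉ uIcc a b := notMem_uIcc_of_lt ha (ha.trans_le hab)
  rw [integral_add ((intervalIntegrable_rpow (Or.inr h0)).const_mul _)
      ((intervalIntegrable_rpow (Or.inr h0)).const_mul _),
    intervalIntegral.integral_const_mul, intervalIntegral.integral_const_mul]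
  have h₁ := integral_rpow_neg_le ha hab hsum
  have h₂ := integral_rpow_neg_le ha hab (p := β₂ + 1) (by linarith)
  rw [show 1 - (β₂ + 1) = -β₂ by ring, add_sub_cancel_right] at h₂
  calc K * (∫ x in a..b, x ^ (-(β₁ + β₂))) + β₂ * ∫ x in a..b, x ^ (-(β₂ + 1))
      ≤ K * (a ^ (1 - (β₁ + β₂)) / (β₁ + β₂ - 1)) + β₂ * (a ^ (-β₂) / β₂) := by gcongr
    _ = K / (β₁ + β₂ - 1) * a ^ (1 - (β₁ + β₂)) + a ^ (-β₂) := by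
      field_simp

theorem abs_integral_sin_mul_rpow_le {θ : ℝ → ℝ} {a b β₁ β₂ γ K : ℝ} (ha : 0 < a) (hab : a ≤ b)
    (hβ₂ : 0 < β₂) (hsum : 1 < β₁ + β₂) (hγ : γ ≠ 0) (hK : 0 ≤ K)
    (hθ : ∀ x ∈ Icc a b, DifferentiableAt ℝ θ x)
    (hθ' : ∀ x ∈ Icc a b, |deriv θ x - γ| ≤ K * x ^ (-β₁)) :
    |∫ x in a..b, sin (θ x) * x ^ (-β₂)| ≤
      (K / (β₁ + β₂ - 1) * a ^ (1 - (β₁ + β₂)) + 3 * a ^ (-β₂)) / |γ| := by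
  set F : ℝ → ℝ := fun x => -(cos (θ x) * x ^ (-β₂)) / γ
  have hpos : ∀ x ∈ Icc a b, 0 < x := fun x hx => ha.trans_le hx.1
  have hF : ∀ x ∈ Icc a b, HasDerivAt F
      ((sin (θ x) * deriv θ x * x ^ (-β₂) + β₂ * cos (θ x) * x ^ (-β₂ - 1)) / γ) x := by
    intro x hx
    exact ((hθ x hx).hasDerivAt.cos.fun_mul
      (hasDerivAt_rpow_const (p := -β₂) (Or.inl (hpos x hx).ne'))).fun_neg.div_const γ
      |>.congr_deriv (by ring)
  have hF_le : ∀ x ∈ Icc a b, |F x| ≤ a ^ (-β₂) / |γ| := by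
    intro x hx
    rw [abs_div, abs_neg, abs_mul, abs_of_pos (rpow_pos_of_pos (hpos x hx) _)]
    gcongr
    calc |cos (θ x)| * x ^ (-β₂) ≤ x ^ (-β₂) :=
          mul_le_of_le_one_left (rpow_nonneg (hpos x hx).le _) (abs_cos_le_one _)
      _ ≤ a ^ (-β₂) := rpow_le_rpow_of_nonpos ha hx.1 (by linarith)
  have hf : IntervalIntegrable (fun x => sin (θ x) * x ^ (-β₂)) volume a b := by
    refine ContinuousOn.intervalIntegrable fun x hx => ContinuousAt.continuousWithinAt ?_
    rw [uIcc_of_le hab] at hx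
    exact (continuous_sin.continuousAt.comp (hθ x hx).continuousAt).mul
      (continuousAt_rpow_const _ _ (Or.inl (hpos x hx).ne'))
  have h0 : (0 : ℝ) ∉ uIcc a b := notMem_uIcc_of_lt ha (ha.trans_le hab)
  have hG : IntervalIntegrable
      (fun x => (K * x ^ (-(β₁ + β₂)) + β₂ * x ^ (-(β₂ + 1))) / |γ|) volume a b :=
    (((intervalIntegrable_rpow (Or.inr h0)).const_mul _).add
      ((intervalIntegrable_rpow (Or.inr h0)).const_mul _)).div_const _
  have hmain := abs_integral_sub_sub_le_of_hasDerivAt hab hF hf hG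
    (fun x hx => abs_sin_mul_rpow_sub_le (hpos x hx) hβ₂.le hγ (hθ' x hx))
  rw [intervalIntegral.integral_div] at hmain
  have herr := integral_mul_rpow_add_mul_rpow_le ha hab hβ₂ hsum hK
  calc |∫ x in a..b, sin (θ x) * x ^ (-β₂)|
      ≤ |(∫ x in a..b, sin (θ x) * x ^ (-β₂)) - (F b - F a)| + (|F b| + |F a|) := by
        linarith [abs_sub_abs_le_abs_sub (∫ x in a..b, sin (θ x) * x ^ (-β₂)) (F b - F a),
          abs_sub (F b) (F a)]
    _ ≤ (K / (β₁ + β₂ - 1) * a ^ (1 - (β₁ + β₂)) + a ^ (-β₂)) / |γ|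
          + (a ^ (-β₂) / |γ| + a ^ (-β₂) / |γ|) := by
        gcongr
        · exact hmain.trans (by gcongr)
        · exact hF_le b ⟨hab, le_rfl⟩
        · exact hF_le a ⟨le_rfl, hab⟩
    _ = (K / (β₁ + β₂ - 1) * a ^ (1 - (β₁ + β₂)) + 3 * a ^ (-β₂)) / |γ| := by ring

theorem abs_integral_sin_mul_rpow_le_rpow {θ : ℝ → ℝ} {a b β β₁ β₂ γ K : ℝ} (ha : 1 ≤ a)
    (hab : a ≤ b) (hβ₂ : 0 < β₂) (hsum : 1 < β₁ + β₂) (hγ : γ ≠ 0) (hK : 0 ≤ K)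
    (hβ_le₁ : β ≤ β₂) (hβ_le₂ : β ≤ β₁ + β₂ - 1)
    (hθ : ∀ x ∈ Icc a b, DifferentiableAt ℝ θ x)
    (hθ' : ∀ x ∈ Icc a b, |deriv θ x - γ| ≤ K * x ^ (-β₁)) :
    |∫ x in a..b, sin (θ x) * x ^ (-β₂)| ≤ (K / (β₁ + β₂ - 1) + 3) / |γ| * a ^ (-β) := by
  refine (abs_integral_sin_mul_rpow_le (by linarith) hab hβ₂ hsum hγ hK hθ hθ').trans ?_
  calc (K / (β₁ + β₂ - 1) * a ^ (1 - (β₁ + β₂)) + 3 * a ^ (-β₂)) / |γ|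
      ≤ (K / (β₁ + β₂ - 1) * a ^ (-β) + 3 * a ^ (-β)) / |γ| := by
        gcongr
        linarith
    _ = (K / (β₁ + β₂ - 1) + 3) / |γ| * a ^ (-β) := by ring

theorem abs_integral_cos_mul_rpow_le_rpow {θ : ℝ → ℝ} {a b β β₁ β₂ γ K : ℝ} (ha : 1 ≤ a)
    (hab : a ≤ b) (hβ₂ : 0 < β₂) (hsum : 1 < β₁ + β₂) (hγ : γ ≠ 0) (hK : 0 ≤ K)
    (hβ_le₁ : β ≤ β₂) (hβ_le₂ : β ≤ β₁ + β₂ - 1)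
    (hθ : ∀ x ∈ Icc a b, DifferentiableAt ℝ θ x)
    (hθ' : ∀ x ∈ Icc a b, |deriv θ x - γ| ≤ K * x ^ (-β₁)) :
    |∫ x in a..b, cos (θ x) * x ^ (-β₂)| ≤ (K / (β₁ + β₂ - 1) + 3) / |γ| * a ^ (-β) := by
  simpa only [sin_add_pi_div_two] using
    abs_integral_sin_mul_rpow_le_rpow (θ := fun x => θ x + π / 2) ha hab hβ₂ hsum hγ hK
      hβ_le₁ hβ_le₂ (fun x hx => (hθ x hx).add_const _)
      (fun x hx => by rw [deriv_add_const]; exact hθ' x hx)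

theorem oscillatory_integral_bound_general
    (β₁ β₂ γ K β : ℝ) (hβ₂ : 1 / 2 < β₂) (hγ : γ ≠ 0)
    (hsum : 1 < β₁ + β₂) (hK : 0 ≤ K)
    (hβ : β = min β₂ (min (β₁ + β₂ - 1) (2 * β₂ - 1))) :
    ∃ C : ℝ, 0 < C ∧ ∀ θ : ℝ → ℝ,
      (∀ x : ℝ, 1 < x → DifferentiableAt ℝ θ x) →
      (∀ x : ℝ, 1 < x → |deriv θ x - γ| ≤ K * x ^ (-β₁)) →
      ∀ a b : ℝ, 1 < a → a < b →
        |∫ x in a..b, Real.sin (θ x) * x ^ (-β₂)| ≤ C * a ^ (-β) ∧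
        |∫ x in a..b, Real.cos (θ x) * x ^ (-β₂)| ≤ C * a ^ (-β) := by
  have hβ_le₁ : β ≤ β₂ := hβ ▸ min_le_left _ _
  have hβ_le₂ : β ≤ β₁ + β₂ - 1 := hβ ▸ (min_le_right _ _).trans (min_le_left _ _)
  refine ⟨(K / (β₁ + β₂ - 1) + 3) / |γ|, by positivity, fun θ hθ hθ' a b ha hab => ?_⟩
  have hθ_Icc : ∀ x ∈ Icc a b, DifferentiableAt ℝ θ x := fun x hx => hθ x (ha.trans_le hx.1)
  have hθ'_Icc : ∀ x ∈ Icc a b, |deriv θ x - γ| ≤ K * x ^ (-β₁) :=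
    fun x hx => hθ' x (ha.trans_le hx.1)
  exact ⟨abs_integral_sin_mul_rpow_le_rpow ha.le hab.le (by linarith) hsum hγ hK hβ_le₁ hβ_le₂
      hθ_Icc hθ'_Icc,
    abs_integral_cos_mul_rpow_le_rpow ha.le hab.le (by linarith) hsum hγ hK hβ_le₁ hβ_le₂
      hθ_Icc hθ'_Icc⟩

/-- Let `β₁ > 0`, `β₂ > 1/2`, `γ ≠ 0` with `β₁ + β₂ > 1`, and set
`β = min{β₂, β₁+β₂-1, 2β₂-1}`; let `K ≥ 0`. If `θ` is differentiable on `(1,∞)` with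
`|θ'(x) - γ| ≤ K·x^{-β₁}` for `x > 1`, then there is `C > 0` (depending only on
`γ, β₁, β₂, K`) with `|∫_a^b sin(θ(x))·x^{-β₂} dx| ≤ C·a^{-β}` and
`|∫_a^b cos(θ(x))·x^{-β₂} dx| ≤ C·a^{-β}` for all `1 < a < b`. -/
theorem oscillatory_integral_bound
    (β₁ β₂ γ K β : ℝ) (hβ₁ : 0 < β₁) (hβ₂ : 1 / 2 < β₂) (hγ : γ ≠ 0)
    (hsum : 1 < β₁ + β₂) (hK : 0 ≤ K)
    (hβ : β = min β₂ (min (β₁ + β₂ - 1) (2 * β₂ - 1))) :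
    ∃ C : ℝ, 0 < C ∧ ∀ θ : ℝ → ℝ,
      (∀ x : ℝ, 1 < x → DifferentiableAt ℝ θ x) →
      (∀ x : ℝ, 1 < x → |deriv θ x - γ| ≤ K * x ^ (-β₁)) →
      ∀ a b : ℝ, 1 < a → a < b →
        |∫ x in a..b, Real.sin (θ x) * x ^ (-β₂)| ≤ C * a ^ (-β) ∧
        |∫ x in a..b, Real.cos (θ x) * x ^ (-β₂)| ≤ C * a ^ (-β) :=
  oscillatory_integral_bound_general β₁ β₂ γ K β hβ₂ hγ hsum hK hβ
end
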